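/- arXiv:1602.03644 — 3 statements merged into one kernel-verified Lean document; each statement's English description precedes it below -/
import Mathlib

section
/- Alzer's inequality: for real m > 1 and z > 0, γ(m, z)/Γ(m) > (1 − exp(−c z))^m where c = (Γ(m+1))^{−1/m}. -/
/-!
Write `F(z) = γ(m, z) / Γ(m)` and `G(z) = (1 - e^{-cz})^m`. Both vanish at `0` and tend to `1`
at infinity. The logarithm of the ratio of densities `F'(t) / G'(t)` is `q(ct)`, where
`q(x) = (m - 1) log (x / (1 - e^{-x})) - (1 - c) x / c` is strictly concave on `(0, ∞)` and,
by the choice `c^m Γ(m + 1) = 1`, tends to `0` at `0+`. So `F' - G'` is positive up to some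
point and negative afterwards: `F - G` increases and then decreases to its limit `0`.
-/

open Real Set Filter Topology MeasureTheory

lemma one_sub_exp_neg_pos {x : ℝ} (hx : 0 < x) : 0 < 1 - exp (-x) :=
  sub_pos.2 (exp_lt_one_iff.2 (neg_lt_zero.2 hx))

lemma hasDerivAt_one_sub_exp_neg (x : ℝ) : HasDerivAt (fun x => 1 - exp (-x)) (exp (-x)) x := by
  simpa using ((hasDerivAt_neg x).exp).const_sub 1

lemma exp_mul_sq_lt_sq_exp_sub_one {x : ℝ} (hx : x ≠ 0) : exp x * x ^ 2 < (exp x - 1) ^ 2 := by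
  have hsinh : (exp x - 1) ^ 2 = exp x * (2 * sinh (x / 2)) ^ 2 := by
    have hu : exp x = exp (x / 2) ^ 2 := by rw [← exp_nat_mul]; ring_nf
    rw [sinh_eq, exp_neg, hu]
    field_simp
  have habs : |x| < |2 * sinh (x / 2)| := by
    rw [abs_mul, abs_two, abs_sinh, abs_div, abs_two]
    linarith [self_lt_sinh_iff.mpr (by positivity : 0 < |x| / 2)]
  rw [hsinh]
  exact mul_lt_mul_of_pos_left (sq_lt_sq.mpr habs) (exp_pos x)

lemma strictAntiOn_inv_sub_inv_exp_sub_one :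
    StrictAntiOn (fun x : ℝ => x⁻¹ - (exp x - 1)⁻¹) (Ioi 0) := by
  have hexp : ∀ x : ℝ, 0 < x → exp x - 1 ≠ 0 := fun x hx => by
    linarith [one_lt_exp_iff.mpr hx]
  have hderiv : ∀ x : ℝ, 0 < x → HasDerivAt (fun x : ℝ => x⁻¹ - (exp x - 1)⁻¹)
      (-(x ^ 2)⁻¹ + exp x / (exp x - 1) ^ 2) x := fun x hx => by
    refine ((hasDerivAt_inv hx.ne').fun_sub
      (((hasDerivAt_exp x).sub_const 1).fun_inv (hexp x hx))).congr_deriv ?_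
    ring
  refine strictAntiOn_of_hasDerivWithinAt_neg (convex_Ioi 0)
    (fun x hx => (hderiv x hx).continuousAt.continuousWithinAt)
    (fun x hx => (hderiv x (interior_subset hx)).hasDerivWithinAt) fun x hx => ?_
  rw [interior_Ioi] at hx
  have hx0 : (0 : ℝ) < x := hx
  have := exp_mul_sq_lt_sq_exp_sub_one hx0.ne'
  rw [neg_add_lt_iff_lt_add, add_zero, div_lt_iff₀ (pow_pos (sub_pos.2 (one_lt_exp_iff.2 hx0)) 2),
    inv_mul_eq_div, lt_div_iff₀ (by positivity)]
  linarith

lemma hasDerivAt_log_sub_log_one_sub_exp_neg {x : ℝ} (hx : 0 < x) :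
    HasDerivAt (fun x => log x - log (1 - exp (-x))) (x⁻¹ - (exp x - 1)⁻¹) x := by
  refine ((hasDerivAt_log hx.ne').sub
    ((hasDerivAt_one_sub_exp_neg x).log (one_sub_exp_neg_pos hx).ne')).congr_deriv ?_
  have : exp x - 1 ≠ 0 := (sub_pos.2 (one_lt_exp_iff.2 hx)).ne'
  rw [exp_neg]
  field_simp

lemma strictConcaveOn_mul_log_sub_log_one_sub_exp_neg_sub_mul {a : ℝ} (ha : 0 < a) (k : ℝ) :
    StrictConcaveOn ℝ (Ioi 0) fun x => a * (log x - log (1 - exp (-x))) - k * x := by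
  have hderiv : ∀ x ∈ Ioi (0 : ℝ),
      HasDerivAt (fun x => a * (log x - log (1 - exp (-x))) - k * x)
        (a * (x⁻¹ - (exp x - 1)⁻¹) - k) x := fun x hx => by
    simpa using ((hasDerivAt_log_sub_log_one_sub_exp_neg hx).const_mul a).fun_sub
      ((hasDerivAt_id x).const_mul k)
  refine StrictAntiOn.strictConcaveOn_of_deriv (convex_Ioi 0)
    (fun x hx => (hderiv x hx).continuousAt.continuousWithinAt) ?_
  rw [interior_Ioi]
  intro x hx y hy hxy
  rw [(hderiv x hx).deriv, (hderiv y hy).deriv]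
  have := mul_lt_mul_of_pos_left (strictAntiOn_inv_sub_inv_exp_sub_one hx hy hxy) ha
  linarith

lemma tendsto_log_sub_log_one_sub_exp_neg :
    Tendsto (fun x => log x - log (1 - exp (-x))) (𝓝[>] 0) (𝓝 0) := by
  have hslope : Tendsto (fun x => (1 - exp (-x)) / x) (𝓝[>] 0) (𝓝 1) := by
    have h := (hasDerivAt_iff_tendsto_slope.mp (hasDerivAt_one_sub_exp_neg 0)).mono_left
      (nhdsWithin_mono 0 (show Ioi (0 : ℝ) ⊆ {0}ᶜ from fun x hx => ne_of_gt hx))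
    rw [neg_zero, exp_zero] at h
    exact h.congr fun x => by simp [slope_def_field]
  have hlog := ((continuousAt_log one_ne_zero).tendsto.comp hslope).neg
  rw [log_one, neg_zero] at hlog
  refine hlog.congr' ?_
  filter_upwards [self_mem_nhdsWithin] with x (hx : 0 < x)
  rw [Function.comp_apply, log_div (one_sub_exp_neg_pos hx).ne' hx.ne']
  ring

lemma ConcaveOn.slope_le_div_of_tendsto_nhdsGT_zero {q : ℝ → ℝ} (hq : ConcaveOn ℝ (Ioi 0) q)
    (h0 : Tendsto q (𝓝[>] 0) (𝓝 0)) {x y : ℝ} (hx : 0 < x) (hxy : x < y) :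
    (q y - q x) / (y - x) ≤ q x / x := by
  have hlim : Tendsto (fun ε => (q x - q ε) / (x - ε)) (𝓝[>] 0) (𝓝 (q x / x)) := by
    have hε : Tendsto (fun ε : ℝ => ε) (𝓝[>] 0) (𝓝 0) :=
      tendsto_nhdsWithin_of_tendsto_nhds tendsto_id
    have := ((tendsto_const_nhds (x := q x)).sub h0).div (tendsto_const_nhds.sub hε)
      (sub_ne_zero.2 hx.ne')
    simp only [sub_zero] at this
    exact this
  refine ge_of_tendsto hlim ?_
  filter_upwards [Ioo_mem_nhdsGT hx] with ε hε
  exact hq.slope_anti_adjacent hε.1 (hx.trans hxy) hε.2 hxy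

lemma StrictConcaveOn.neg_of_nonpos_of_lt {q : ℝ → ℝ} (hq : StrictConcaveOn ℝ (Ioi 0) q)
    (h0 : Tendsto q (𝓝[>] 0) (𝓝 0)) {x y : ℝ} (hx : 0 < x) (hxy : x < y) (hqx : q x ≤ 0) :
    q y < 0 := by
  have hw : x < (x + y) / 2 := by linarith
  have hsecant := hq.secant_strict_mono hx (hx.trans hw) (hx.trans hxy) hw.ne' (by linarith)
    (by linarith : (x + y) / 2 < y)
  have hslope := hq.concaveOn.slope_le_div_of_tendsto_nhdsGT_zero h0 hx hw
  have hneg : (q y - q x) / (y - x) < 0 :=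
    hsecant.trans_le (hslope.trans (div_nonpos_of_nonpos_of_nonneg hqx hx.le))
  rw [div_lt_iff₀ (sub_pos.2 hxy), zero_mul] at hneg
  linarith

lemma intervalIntegral_lt_of_single_crossing {f g : ℝ → ℝ} {a z : ℝ} (haz : a < z)
    (hf : IntegrableOn f (Ioi a)) (hg : IntegrableOn g (Ioi a))
    (hfg : ∫ t in Ioi a, f t = ∫ t in Ioi a, g t)
    (hcross : ∀ s t, a < s → s < t → f s ≤ g s → f t < g t) :
    ∫ t in a..z, g t < ∫ t in a..z, f t := by
  have hfz := hf.mono_set (Ioi_subset_Ioi haz.le)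
  have hgz := hg.mono_set (Ioi_subset_Ioi haz.le)
  have hf_split := intervalIntegral.integral_interval_add_Ioi hf hfz
  have hg_split := intervalIntegral.integral_interval_add_Ioi hg hgz
  by_cases hpos : ∀ t ∈ Ioo a z, g t < f t
  · have hint (h : ℝ → ℝ) (hh : IntegrableOn h (Ioi a)) : IntervalIntegrable h volume a z :=
      (intervalIntegrable_iff_integrableOn_Ioc_of_le haz.le).2 (hh.mono_set Ioc_subset_Ioi_self)
    have := intervalIntegral.intervalIntegral_pos_of_pos_on ((hint f hf).sub (hint g hg))
      (fun t ht => sub_pos.2 (hpos t ht)) haz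
    rw [intervalIntegral.integral_sub (hint f hf) (hint g hg)] at this
    linarith
  · push Not at hpos
    obtain ⟨s, hs, hfgs⟩ := hpos
    have htail : ∀ t ∈ Ioi z, 0 < g t - f t := fun t ht =>
      sub_pos.2 (hcross s t hs.1 (hs.2.trans ht) hfgs)
    have : 0 < ∫ t in Ioi z, (g t - f t) := by
      rw [setIntegral_pos_iff_support_of_nonneg_ae
        (ae_restrict_of_forall_mem measurableSet_Ioi fun t ht => (htail t ht).le) (hgz.sub hfz),
        inter_eq_right.2 fun t ht => Function.mem_support.2 (htail t ht).ne']
      simp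
    rw [integral_sub hgz hfz] at this
    linarith

/-- The density of the exponentiated exponential distribution, whose CDF is `(1 - e^{-ct})^m`. -/
noncomputable def exponentiatedExpPDF (m c t : ℝ) : ℝ :=
  c * exp (-(c * t)) * m * (1 - exp (-(c * t))) ^ (m - 1)

section ExponentiatedExp

variable {m c : ℝ}

lemma hasDerivAt_one_sub_exp_neg_mul_rpow (hm : 1 ≤ m) (t : ℝ) :
    HasDerivAt (fun t => (1 - exp (-(c * t))) ^ m) (exponentiatedExpPDF m c t) t := by
  have h : HasDerivAt (fun t => 1 - exp (-(c * t))) (c * exp (-(c * t))) t := by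
    simpa [mul_comm] using (((hasDerivAt_id t).const_mul c).neg.exp).const_sub 1
  exact h.rpow_const (Or.inr hm)

lemma exponentiatedExpPDF_pos (hm : 0 < m) (hc : 0 < c) {t : ℝ} (ht : 0 < t) :
    0 < exponentiatedExpPDF m c t := by
  have := rpow_pos_of_pos (one_sub_exp_neg_pos (mul_pos hc ht)) (m - 1)
  unfold exponentiatedExpPDF
  positivity

lemma tendsto_one_sub_exp_neg_mul_rpow_atTop (hc : 0 < c) :
    Tendsto (fun t => (1 - exp (-(c * t))) ^ m) atTop (𝓝 1) := by
  have h : Tendsto (fun t => 1 - exp (-(c * t))) atTop (𝓝 1) := by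
    simpa using (tendsto_exp_atBot.comp
      (tendsto_neg_atTop_atBot.comp (tendsto_id.const_mul_atTop hc))).const_sub 1
  have := (continuousAt_rpow_const 1 m (Or.inl one_ne_zero)).tendsto.comp h
  rwa [one_rpow] at this

lemma integrableOn_exponentiatedExpPDF (hm : 1 ≤ m) (hc : 0 < c) :
    IntegrableOn (exponentiatedExpPDF m c) (Ioi 0) :=
  integrableOn_Ioi_deriv_of_nonneg' (fun t _ => hasDerivAt_one_sub_exp_neg_mul_rpow hm t)
    (fun _ ht => (exponentiatedExpPDF_pos (by linarith) hc ht).le)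
    (tendsto_one_sub_exp_neg_mul_rpow_atTop hc)

lemma integral_Ioi_exponentiatedExpPDF (hm : 1 ≤ m) (hc : 0 < c) :
    ∫ t in Ioi 0, exponentiatedExpPDF m c t = 1 := by
  rw [integral_Ioi_of_hasDerivAt_of_nonneg'
    (fun t _ => hasDerivAt_one_sub_exp_neg_mul_rpow hm t)
    (fun _ ht => (exponentiatedExpPDF_pos (by linarith) hc ht).le)
    (tendsto_one_sub_exp_neg_mul_rpow_atTop hc)]
  simp [zero_rpow (by linarith : m ≠ 0)]

lemma intervalIntegral_exponentiatedExpPDF (hm : 1 ≤ m) (hc : 0 < c) {z : ℝ} (hz : 0 ≤ z) :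
    ∫ t in 0..z, exponentiatedExpPDF m c t = (1 - exp (-(c * z))) ^ m := by
  rw [intervalIntegral.integral_eq_sub_of_hasDerivAt
    (fun t _ => hasDerivAt_one_sub_exp_neg_mul_rpow hm t)
    ((intervalIntegrable_iff_integrableOn_Ioc_of_le hz).2
      ((integrableOn_exponentiatedExpPDF hm hc).mono_set Ioc_subset_Ioi_self))]
  simp [zero_rpow (by linarith : m ≠ 0)]

end ExponentiatedExp

lemma log_gamma_density_sub_log_exponentiatedExpPDF {m c t : ℝ} (hm : 0 < m) (hc : 0 < c)
    (hcm : m * c ^ m * Gamma m = 1) (ht : 0 < t) :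
    log (t ^ (m - 1) * exp (-t) / Gamma m) - log (exponentiatedExpPDF m c t) =
      (m - 1) * (log (c * t) - log (1 - exp (-(c * t)))) - (1 - c) / c * (c * t) := by
  have hb := one_sub_exp_neg_pos (mul_pos hc ht)
  have hΓ := Gamma_pos_of_pos hm
  have hlog := congrArg log hcm
  rw [log_one, log_mul (by positivity) hΓ.ne', log_mul hm.ne' (by positivity), log_rpow hc] at hlog
  unfold exponentiatedExpPDF
  rw [log_div (by positivity) hΓ.ne', log_mul (by positivity) (exp_pos _).ne', log_rpow ht,
    log_exp, log_mul (by positivity) (by positivity), log_mul (by positivity) hm.ne',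
    log_mul hc.ne' (exp_pos _).ne', log_exp, log_rpow hb, log_mul hc.ne' ht.ne']
  field_simp
  linear_combination -hlog

lemma gamma_density_lt_exponentiatedExpPDF_of_le {m c s t : ℝ} (hm : 1 < m) (hc : 0 < c)
    (hcm : m * c ^ m * Gamma m = 1) (hs : 0 < s) (hst : s < t)
    (h : s ^ (m - 1) * exp (-s) / Gamma m ≤ exponentiatedExpPDF m c s) :
    t ^ (m - 1) * exp (-t) / Gamma m < exponentiatedExpPDF m c t := by
  set q : ℝ → ℝ := fun x => (m - 1) * (log x - log (1 - exp (-x))) - (1 - c) / c * x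
  have hq : StrictConcaveOn ℝ (Ioi 0) q :=
    strictConcaveOn_mul_log_sub_log_one_sub_exp_neg_sub_mul (sub_pos.2 hm) _
  have hq0 : Tendsto q (𝓝[>] 0) (𝓝 0) := by
    simpa using (tendsto_log_sub_log_one_sub_exp_neg.const_mul (m - 1)).sub
      ((tendsto_nhdsWithin_of_tendsto_nhds tendsto_id).const_mul ((1 - c) / c))
  have hdens : ∀ x : ℝ, 0 < x → 0 < x ^ (m - 1) * exp (-x) / Gamma m := fun x hx => by
    have := Gamma_pos_of_pos (by linarith : 0 < m)
    positivity
  have hsign : ∀ x : ℝ, 0 < x →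
      log (x ^ (m - 1) * exp (-x) / Gamma m) - log (exponentiatedExpPDF m c x) = q (c * x) :=
    fun x hx => log_gamma_density_sub_log_exponentiatedExpPDF (by linarith) hc hcm hx
  have hqs : q (c * s) ≤ 0 := by
    rw [← hsign s hs, sub_nonpos]
    exact log_le_log (hdens s hs) h
  have hqt := hq.neg_of_nonpos_of_lt hq0 (mul_pos hc hs) (mul_lt_mul_of_pos_left hst hc) hqs
  have ht := hs.trans hst
  rw [← hsign t ht, sub_neg] at hqt
  exact (log_lt_log_iff (hdens t ht) (exponentiatedExpPDF_pos (by linarith) hc ht)).1 hqt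

/-- Alzer's inequality: for real `m > 1` and `z > 0`,
`γ(m, z)/Γ(m) > (1 − exp(−c z))^m` with `c = (Γ(m+1))^{−1/m}`. -/
theorem alzer_inequality (m z : ℝ) (hm : 1 < m) (hz : 0 < z) :
    (∫ t in (0:ℝ)..z, t ^ (m - 1) * Real.exp (-t)) / Real.Gamma m >
      (1 - Real.exp (-(Real.Gamma (m + 1)) ^ (-(1 / m)) * z)) ^ m := by
  set c := Gamma (m + 1) ^ (-(1 / m)) with hc_def
  have hm0 : 0 < m := by linarith
  have hΓ : 0 < Gamma (m + 1) := Gamma_pos_of_pos (by linarith)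
  have hc : 0 < c := rpow_pos_of_pos hΓ _
  have hcm : m * c ^ m * Gamma m = 1 := by
    rw [hc_def, ← rpow_mul hΓ.le, show -(1 / m) * m = -1 by field_simp, rpow_neg_one,
      mul_right_comm, ← Gamma_add_one hm0.ne', mul_inv_cancel₀ hΓ.ne']
  have hΓ_eq : Gamma m = ∫ t in Ioi 0, t ^ (m - 1) * exp (-t) := by
    simp_rw [Gamma_eq_integral hm0, mul_comm]
  have hf : IntegrableOn (fun t => t ^ (m - 1) * exp (-t) / Gamma m) (Ioi 0) := by
    have := (GammaIntegral_convergent hm0).div_const (Gamma m)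
    simp only [mul_comm] at this
    exact this
  have key := intervalIntegral_lt_of_single_crossing hz hf
    (integrableOn_exponentiatedExpPDF hm.le hc)
    (by rw [integral_div, ← hΓ_eq, div_self (Gamma_pos_of_pos hm0).ne',
      integral_Ioi_exponentiatedExpPDF hm.le hc])
    fun s t hs hst h => gamma_density_lt_exponentiatedExpPDF_of_le hm hc hcm hs hst h
  rw [intervalIntegral_exponentiatedExpPDF hm.le hc hz.le, intervalIntegral.integral_div] at key
  rwa [neg_mul]
end

section
/- For a Gamma(m, m)-distributed fading gain h (integer m ≥ 1) and nonnegative random variable I independent of h, P(h > z I) = Σ_{k=0}^{m-1} ((−s)^k / k!) · (d^k/ds^k) L_I(s) evaluated at s = m z, where L_I(s) = E[e^{-sI}]. -/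
/-!
Conditioning on `I` (independence and Fubini), `P(h > z I) = E[F(z I)]` with
`F(x) = e^{-mx} ∑_{k<m} (mx)^k/k!` the tail of `h`. With `s = m z`, the `k`-th term of
`E[F(z I)]` is `s^k/k! · E[I^k e^{-sI}]`, and `E[I^k e^{-sI}] = (-1)^k L_I^{(k)}(s)`, because
`L_I(s) = mgf I (-s)` and, as `I ≥ 0`, every `-s < 0` lies in the interior of the domain where
the moment generating function of `I` is finite, so it may be differentiated under the integral.
-/

open Real MeasureTheory Finset ProbabilityTheory

namespace ProbabilityTheory

variable {Ω β γ : Type*} [MeasurableSpace Ω] [MeasurableSpace β] [MeasurableSpace γ]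
  {μ : Measure Ω} [IsFiniteMeasure μ] {X : Ω → β} {Y : Ω → γ} {S : Set (β × γ)}

theorem IndepFun.measure_mem_eq_lintegral (hXY : IndepFun X Y μ) (hX : Measurable X)
    (hY : Measurable Y) (hS : MeasurableSet S) :
    μ {ω | (X ω, Y ω) ∈ S} = ∫⁻ ω, μ {ω' | (X ω, Y ω') ∈ S} ∂μ := by
  have hmap := (indepFun_iff_map_prod_eq_prod_map_map hX.aemeasurable hY.aemeasurable).1 hXY
  calc μ {ω | (X ω, Y ω) ∈ S} = (μ.map X).prod (μ.map Y) S := by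
        rw [← hmap, Measure.map_apply (hX.prodMk hY) hS]; rfl
    _ = ∫⁻ x, μ.map Y (Prod.mk x ⁻¹' S) ∂μ.map X := Measure.prod_apply hS
    _ = ∫⁻ ω, μ {ω' | (X ω, Y ω') ∈ S} ∂μ := by
        rw [lintegral_map (measurable_measure_prodMk_left hS) hX]
        refine lintegral_congr fun ω => ?_
        rw [Measure.map_apply hY (measurable_prodMk_left hS)]; rfl

theorem IndepFun.toReal_measure_mem_eq_integral (hXY : IndepFun X Y μ) (hX : Measurable X)
    (hY : Measurable Y) (hS : MeasurableSet S) :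
    (μ {ω | (X ω, Y ω) ∈ S}).toReal = ∫ ω, (μ {ω' | (X ω, Y ω') ∈ S}).toReal ∂μ := by
  have hmeas : Measurable fun ω => μ {ω' | (X ω, Y ω') ∈ S} :=
    measurable_measure_prodMk_left (ν := μ) (s := {p : Ω × Ω | (X p.1, Y p.2) ∈ S})
      ((hX.comp measurable_fst).prodMk (hY.comp measurable_snd) hS)
  rw [hXY.measure_mem_eq_lintegral hX hY hS,
    integral_toReal hmeas.aemeasurable (.of_forall fun _ => measure_lt_top _ _)]

end ProbabilityTheory

section ExpMoments

variable {Ω : Type*} [MeasurableSpace Ω] {μ : Measure Ω} [IsFiniteMeasure μ] {X : Ω → ℝ}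

theorem Iic_zero_subset_integrableExpSet (hX : AEMeasurable X μ) (hX0 : 0 ≤ᵐ[μ] X) :
    Set.Iic 0 ⊆ integrableExpSet X μ := fun t ht => by
  refine .of_mem_Icc 0 1 (measurable_exp.comp_aemeasurable (hX.const_mul t)) ?_
  filter_upwards [hX0] with ω hω
  exact ⟨(exp_pos _).le, exp_le_one_iff.2 (mul_nonpos_of_nonpos_of_nonneg ht hω)⟩

theorem Iio_zero_subset_interior_integrableExpSet (hX : AEMeasurable X μ) (hX0 : 0 ≤ᵐ[μ] X) :
    Set.Iio 0 ⊆ interior (integrableExpSet X μ) := by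
  simpa only [interior_Iic] using interior_mono (Iic_zero_subset_integrableExpSet hX hX0)

theorem iteratedDeriv_integral_exp_neg_mul (hX : AEMeasurable X μ) (hX0 : 0 ≤ᵐ[μ] X) {s : ℝ}
    (hs : 0 < s) (n : ℕ) :
    iteratedDeriv n (fun t => ∫ ω, exp (-t * X ω) ∂μ) s =
      (-1) ^ n * ∫ ω, X ω ^ n * exp (-s * X ω) ∂μ := by
  have hmem : -s ∈ interior (integrableExpSet X μ) :=
    Iio_zero_subset_interior_integrableExpSet hX hX0 (neg_lt_zero.2 hs)
  exact (iteratedDeriv_comp_neg n (mgf X μ) s).trans (by rw [iteratedDeriv_mgf hmem, smul_eq_mul])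

theorem integral_exp_neg_mul_sum_pow_div_factorial (hX : AEMeasurable X μ) (hX0 : 0 ≤ᵐ[μ] X)
    {s : ℝ} (hs : 0 < s) (m : ℕ) :
    ∫ ω, exp (-(s * X ω)) * ∑ k ∈ range m, (s * X ω) ^ k / k.factorial ∂μ =
      ∑ k ∈ range m, (-s) ^ k / k.factorial *
        iteratedDeriv k (fun t => ∫ ω, exp (-t * X ω) ∂μ) s := by
  have hint (k : ℕ) : Integrable (fun ω => X ω ^ k * exp (-s * X ω)) μ :=
    integrable_pow_mul_exp_of_mem_interior_integrableExpSet
      (Iio_zero_subset_interior_integrableExpSet hX hX0 (neg_lt_zero.2 hs)) k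
  calc ∫ ω, exp (-(s * X ω)) * ∑ k ∈ range m, (s * X ω) ^ k / k.factorial ∂μ
      = ∫ ω, ∑ k ∈ range m, s ^ k / k.factorial * (X ω ^ k * exp (-s * X ω)) ∂μ := by
        refine integral_congr_ae (.of_forall fun ω => ?_)
        simp only [mul_sum, mul_pow, neg_mul]
        exact sum_congr rfl fun k _ => by ring
    _ = ∑ k ∈ range m, s ^ k / k.factorial * ∫ ω, X ω ^ k * exp (-s * X ω) ∂μ := by
        rw [integral_finsetSum _ fun k _ => (hint k).const_mul _]
        simp only [integral_const_mul]
    _ = _ := sum_congr rfl fun k _ => by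
        have hsign : ((-1 : ℝ) ^ k) * (-1) ^ k = 1 := by rw [← mul_pow]; norm_num
        rw [iteratedDeriv_integral_exp_neg_mul hX hX0 hs, neg_pow s]
        linear_combination (-(s ^ k / k.factorial * ∫ ω, X ω ^ k * exp (-s * X ω) ∂μ)) * hsign

end ExpMoments

/-- For a `Gamma(m, m)`-distributed fading gain `h` (integer `m ≥ 1`, so
`P(h > x) = e^{-mx} ∑_{k<m} (mx)^k/k!` for `x ≥ 0`) independent of a nonnegative
random variable `I`, and `z > 0`:
`P(h > z I) = [∑_{k<m} ((−s)^k/k!) dᵏ/dsᵏ L_I(s)]_{s = m z}` with `L_I(s) = E[e^{-sI}]`. -/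
theorem coverage_gamma_fading {Ω : Type*} [MeasurableSpace Ω] (μ : Measure Ω)
    [IsProbabilityMeasure μ] (h I : Ω → ℝ) (hh : Measurable h) (hI : Measurable I)
    (hI0 : ∀ ω, 0 ≤ I ω) (hindep : IndepFun h I μ) (m : ℕ) (hm : 1 ≤ m)
    (hccdf : ∀ x : ℝ, 0 ≤ x → (μ {ω | h ω > x}).toReal =
      Real.exp (-(m * x)) * ∑ k ∈ Finset.range m, (m * x) ^ k / (Nat.factorial k))
    (z : ℝ) (hz : 0 < z) :
    (μ {ω | h ω > z * I ω}).toReal =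
      ∑ k ∈ Finset.range m, ((-((m : ℝ) * z)) ^ k / (Nat.factorial k)) *
        iteratedDeriv k (fun s : ℝ => ∫ ω, Real.exp (-s * I ω) ∂μ) ((m : ℝ) * z) := by
  have hs : 0 < (m : ℝ) * z := mul_pos (Nat.cast_pos.2 hm) hz
  have hS : MeasurableSet {p : ℝ × ℝ | z * p.1 < p.2} :=
    measurableSet_lt (measurable_fst.const_mul z) measurable_snd
  rw [← integral_exp_neg_mul_sum_pow_div_factorial hI.aemeasurable (.of_forall hI0) hs m]
  refine (hindep.symm.toReal_measure_mem_eq_integral hI hh hS).trans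
    (integral_congr_ae (.of_forall fun ω => ?_))
  simp only [mul_assoc]
  exact hccdf _ (mul_nonneg hz.le (hI0 ω))
end

section
/- For θ > 0, α > 2, and λ > 0, the all-NLOS closest-BS coverage probability satisfies P_cov^NLOS(θ) = ∫_0^∞ exp(−πλr²(1 + ρ(θ,α))) 2πλ r dr = 1/(1 + ρ(θ,α)), where ρ(θ,α) = θ^{2/α} ∫_{θ^{−2/α}}^∞ 1/(1+u^{α/2}) du; in particular it is independent of λ. -/
/-!
Conditioned on the serving distance `r`, the log-Laplace transform of the interference is
`-2πλ ∫_r^∞ (1 - 1/(1 + θ r^α t^{-α})) t dt`. Substituting `t² = r² θ^{2/α} u` turns this into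
`-πλ r² ρ(θ, α)`, so the coverage integrand becomes `exp(-πλ r² (1 + ρ)) 2πλ r`, a Gaussian
moment integral equal to `1 / (1 + ρ)`: the density `λ` cancels.
-/

open Real MeasureTheory Set

theorem integral_mul_exp_neg_mul_sq_Ioi {b : ℝ} (hb : 0 < b) :
    ∫ r in Ioi 0, r * exp (-b * r ^ 2) = (2 * b)⁻¹ := by
  have h := integral_mul_cexp_neg_mul_sq (b := (b : ℂ)) (by simpa using hb)
  exact_mod_cast h

theorem integral_mul_self_Ioi_eq_half_integral_comp_sqrt (f : ℝ → ℝ) {a : ℝ} (ha : 0 ≤ a) :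
    ∫ x in Ioi a, f x * x = (∫ y in Ioi (a ^ 2), f (√y)) / 2 := by
  have ha' : (a ^ 2) ^ (2 : ℝ)⁻¹ = a := by
    rw [← one_div, ← sqrt_eq_rpow, sqrt_sq ha]
  rw [← integral_comp_rpow_Ioi_of_pos' two_pos (sq_nonneg a), ha', ← integral_div]
  refine setIntegral_congr_fun measurableSet_Ioi fun x hx => ?_
  have hx : 0 ≤ x := ha.trans (le_of_lt hx)
  simp only [smul_eq_mul, rpow_two, sqrt_sq hx]
  norm_num
  ring

theorem one_sub_one_div_one_add_inv {x : ℝ} (hx : 0 < x) : 1 - 1 / (1 + x⁻¹) = 1 / (1 + x) := by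
  field_simp
  ring

/-- The paper's `ρ(θ, α)`. -/
noncomputable def nlosRho (θ α : ℝ) : ℝ :=
  θ ^ (2 / α) * ∫ u in Ioi (θ ^ (-(2 / α))), 1 / (1 + u ^ (α / 2))

theorem nlosRho_nonneg {θ : ℝ} (hθ : 0 ≤ θ) (α : ℝ) : 0 ≤ nlosRho θ α := by
  refine mul_nonneg (rpow_nonneg hθ _) (setIntegral_nonneg measurableSet_Ioi fun u hu => ?_)
  have hu : 0 ≤ u := (rpow_nonneg hθ _).trans (le_of_lt hu)
  positivity

theorem integral_interference_Ioi_eq {θ α r : ℝ} (hθ : 0 < θ) (hα : α ≠ 0) (hr : 0 < r) :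
    ∫ t in Ioi r, (1 - 1 / (1 + θ * r ^ α * t ^ (-α))) * t = r ^ 2 * nlosRho θ α / 2 := by
  set k := r ^ 2 * θ ^ (2 / α) with hk
  have hk_pos : 0 < k := by positivity
  have hr2 : r ^ 2 = k * θ ^ (-(2 / α)) := by
    rw [hk, mul_assoc, ← rpow_add hθ, add_neg_cancel, rpow_zero, mul_one]
  have hratio : ∀ u, 0 ≤ u → θ * r ^ α * √(k * u) ^ (-α) = (u ^ (α / 2))⁻¹ := fun u hu => by
    have hsqrt : √(k * u) = r * θ ^ (1 / α) * √u := by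
      rw [hk, sqrt_mul (by positivity), sqrt_mul (by positivity), sqrt_sq hr.le, sqrt_eq_rpow,
        ← rpow_mul hθ.le]
      ring_nf
    have hu' : √u ^ α = u ^ (α / 2) := by
      rw [sqrt_eq_rpow, ← rpow_mul hu]
      ring_nf
    rw [hsqrt, mul_rpow (by positivity) (sqrt_nonneg u), mul_rpow hr.le (by positivity),
      ← rpow_mul hθ.le, rpow_neg (sqrt_nonneg u), hu', rpow_neg hr.le,
      show 1 / α * -α = -1 by field_simp, rpow_neg_one]
    field_simp
  have hkernel : ∀ u ∈ Ioi (θ ^ (-(2 / α))),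
      1 - 1 / (1 + θ * r ^ α * √(k * u) ^ (-α)) = 1 / (1 + u ^ (α / 2)) := fun u hu => by
    have hu : 0 < u := (rpow_pos_of_pos hθ _).trans hu
    rw [hratio u hu.le, one_sub_one_div_one_add_inv (by positivity)]
  rw [integral_mul_self_Ioi_eq_half_integral_comp_sqrt _ hr.le]
  conv_lhs => rw [hr2, ← integral_comp_mul_left_Ioi' _ _ hk_pos, smul_eq_mul]
  rw [setIntegral_congr_fun measurableSet_Ioi hkernel, nlosRho, hk]
  ring

/-- All-NLOS closest-BS coverage probability: for `θ > 0`, `α > 2`, `λ > 0`,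
`P_cov^NLOS(θ) = ∫_0^∞ exp(−πλr²(1+ρ(θ,α))) 2πλ r dr = 1/(1 + ρ(θ,α))`, where
`ρ(θ,α) = θ^{2/α} ∫_{θ^{−2/α}}^∞ du/(1+u^{α/2})`; in particular it does not
depend on `λ`. -/
theorem nlos_coverage_invariant (θ α lam : ℝ) (hθ : 0 < θ) (hα : 2 < α)
    (hlam : 0 < lam) :
    (∫ r in Set.Ioi (0:ℝ),
        Real.exp (-(2 * Real.pi * lam) *
            ∫ t in Set.Ioi r, (1 - 1 / (1 + θ * r ^ α * t ^ (-α))) * t) *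
          (2 * Real.pi * lam * Real.exp (-(Real.pi * lam * r ^ 2)) * r) =
      ∫ r in Set.Ioi (0:ℝ),
        Real.exp (-(Real.pi * lam * r ^ 2 *
            (1 + θ ^ (2 / α) * ∫ u in Set.Ioi (θ ^ (-(2 / α))), 1 / (1 + u ^ (α / 2))))) *
          (2 * Real.pi * lam * r)) ∧
    (∫ r in Set.Ioi (0:ℝ),
        Real.exp (-(Real.pi * lam * r ^ 2 *
            (1 + θ ^ (2 / α) * ∫ u in Set.Ioi (θ ^ (-(2 / α))), 1 / (1 + u ^ (α / 2))))) *
          (2 * Real.pi * lam * r)) =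
      1 / (1 + θ ^ (2 / α) * ∫ u in Set.Ioi (θ ^ (-(2 / α))), 1 / (1 + u ^ (α / 2))) := by
  rw [← nlosRho.eq_1 θ α]
  have hρ := nlosRho_nonneg hθ.le α
  constructor
  · refine setIntegral_congr_fun measurableSet_Ioi fun r hr => ?_
    rw [integral_interference_Ioi_eq hθ (by linarith) hr,
      show -(π * lam * r ^ 2 * (1 + nlosRho θ α))
        = -(2 * π * lam) * (r ^ 2 * nlosRho θ α / 2) + -(π * lam * r ^ 2) by ring, exp_add]
    ring
  · have hc : 0 < π * lam * (1 + nlosRho θ α) := by positivity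
    calc ∫ r in Ioi 0, exp (-(π * lam * r ^ 2 * (1 + nlosRho θ α))) * (2 * π * lam * r)
        = ∫ r in Ioi 0, 2 * π * lam * (r * exp (-(π * lam * (1 + nlosRho θ α)) * r ^ 2)) := by
          congr! 2 with r; ring_nf
      _ = 1 / (1 + nlosRho θ α) := by
          rw [integral_const_mul, integral_mul_exp_neg_mul_sq_Ioi hc]
          field_simp
end
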